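/- arXiv:2501.04280 — 2 statements merged into one kernel-verified Lean document; each statement's English description precedes it below -/
import Mathlib

section
/- Let γ(θ) be C² and 2π-periodic, let κ denote a scalar (curvature), r > 0, and let τ = (cos θ, sin θ), n = (-sin θ, cos θ). Define B₁(θ) = [[γ(θ), -γ'(θ)],[γ'(θ), γ(θ)]]. Then -[γ(θ) + γ''(θ)]κ n - [γ(θ) sin θ + γ'(θ) cos θ]·(1/r)·r·n equals the pointwise expansion of -(1/r)[r B₁(θ) τ]_s + (γ(θ)/r)e₁ when θ, r are functions of arclength s with τ = X_s, n = -X_s^⊥, κ = θ_s, r_s = cos θ, z_s = sin θ. -/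
open Real

/-- Conservative-form reformulation:
`-[γ(θ)+γ''(θ)] r κ n - [γ(θ) z_s + γ'(θ) r_s] n = -[r B₁(θ) X_s]_s + γ(θ) e₁`,
where `B₁(θ) = [[γ, -γ'],[γ', γ]]`, `X = (r, z)` is arclength-parametrized with tangent
angle `θ(s)` (so `r_s = cos θ`, `z_s = sin θ`, `κ = θ_s`), `τ = (cos θ, sin θ)` and
`n = (-sin θ, cos θ)`. -/
theorem stmt7 (γ θ r z : ℝ → ℝ)
    (hγ : ContDiff ℝ 2 γ) (hper : Function.Periodic γ (2 * π))
    (hθ : ContDiff ℝ (⊤ : ℕ∞) θ) (hrr : ContDiff ℝ (⊤ : ℕ∞) r) (hzz : ContDiff ℝ (⊤ : ℕ∞) z)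
    (hr : ∀ s, deriv r s = Real.cos (θ s)) (hz : ∀ s, deriv z s = Real.sin (θ s))
    (hrpos : ∀ s, 0 < r s) (s : ℝ) :
    (-((γ (θ s) + deriv (deriv γ) (θ s)) * r s * deriv θ s)) •
        ((-Real.sin (θ s), Real.cos (θ s)) : ℝ × ℝ)
      - (γ (θ s) * Real.sin (θ s) + deriv γ (θ s) * Real.cos (θ s)) •
        ((-Real.sin (θ s), Real.cos (θ s)) : ℝ × ℝ)
    = -(deriv (fun t => r t •
          ((γ (θ t) * Real.cos (θ t) - deriv γ (θ t) * Real.sin (θ t),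
            deriv γ (θ t) * Real.cos (θ t) + γ (θ t) * Real.sin (θ t)) : ℝ × ℝ)) s)
      + (γ (θ s)) • (((1:ℝ), (0:ℝ)) : ℝ × ℝ) := by
  have hθ' : HasDerivAt θ (deriv θ s) s :=
    ((hθ.differentiable (by simp)) s).hasDerivAt
  have hγd : Differentiable ℝ γ := hγ.differentiable two_ne_zero
  have hγ2 : ContDiff ℝ (1 + 1) γ := by exact_mod_cast hγ
  have hγ'd : Differentiable ℝ (deriv γ) :=
    (contDiff_succ_iff_deriv.mp hγ2).2.2.differentiable one_ne_zero
  have hγθ : HasDerivAt (fun t => γ (θ t)) (deriv γ (θ s) * deriv θ s) s :=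
    ((hγd (θ s)).hasDerivAt).comp s hθ'
  have hγ'θ : HasDerivAt (fun t => deriv γ (θ t)) (deriv (deriv γ) (θ s) * deriv θ s) s :=
    ((hγ'd (θ s)).hasDerivAt).comp s hθ'
  have hcos : HasDerivAt (fun t => Real.cos (θ t)) (-Real.sin (θ s) * deriv θ s) s :=
    (Real.hasDerivAt_cos (θ s)).comp s hθ'
  have hsin : HasDerivAt (fun t => Real.sin (θ t)) (Real.cos (θ s) * deriv θ s) s :=
    (Real.hasDerivAt_sin (θ s)).comp s hθ'
  have hrd : HasDerivAt r (Real.cos (θ s)) s := by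
    have := ((hrr.differentiable (by simp)) s).hasDerivAt
    rwa [hr s] at this
  have hP : HasDerivAt (fun t => γ (θ t) * Real.cos (θ t) - deriv γ (θ t) * Real.sin (θ t))
      ((deriv γ (θ s) * deriv θ s) * Real.cos (θ s) + γ (θ s) * (-Real.sin (θ s) * deriv θ s)
        - ((deriv (deriv γ) (θ s) * deriv θ s) * Real.sin (θ s)
          + deriv γ (θ s) * (Real.cos (θ s) * deriv θ s))) s :=
    (hγθ.mul hcos).sub (hγ'θ.mul hsin)
  have hQ : HasDerivAt (fun t => deriv γ (θ t) * Real.cos (θ t) + γ (θ t) * Real.sin (θ t))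
      ((deriv (deriv γ) (θ s) * deriv θ s) * Real.cos (θ s)
        + deriv γ (θ s) * (-Real.sin (θ s) * deriv θ s)
        + ((deriv γ (θ s) * deriv θ s) * Real.sin (θ s)
          + γ (θ s) * (Real.cos (θ s) * deriv θ s))) s :=
    (hγ'θ.mul hcos).add (hγθ.mul hsin)
  have hF := (hrd.smul (hP.prodMk hQ)).deriv
  erw [hF]
  have htrig := Real.sin_sq_add_cos_sq (θ s)
  apply Prod.ext <;>
    simp only [Prod.smul_mk, Prod.mk_add_mk, Prod.neg_mk, Prod.fst_add, Prod.snd_add,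
      Prod.fst_sub, Prod.snd_sub, Prod.fst_neg, Prod.snd_neg, smul_eq_mul]
  · linear_combination γ (θ s) * htrig
  · ring
end

section
/- For smooth functions μ_S, κ, r of arclength s with r > 0, and vectors n = (-z_s, r_s), τ = X_s = (r_s, z_s), e₁ = (1,0), where X = (r,z) is arclength-parametrized with curvature κ = θ_s, the following identity holds: [(r(μ_S)_s)_s - 2r μ_S κ(μ_S - κ) + ½ r μ_S³] n = [r(μ_S)_s n + ½ r μ_S² X_s + (n·e₁) μ_S X_s]_s - ½ μ_S² e₁ + μ_S κ e₁, provided μ_S = κ - (n·e₁)/r. -/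
open Real

/-- Conservative-form rewriting of the Willmore regularization term:
`[(r(μ_S)_s)_s - 2r μ_S κ(μ_S-κ) + ½ r μ_S³] n
  = [r(μ_S)_s n + ½ r μ_S² X_s + (n·e₁) μ_S X_s]_s - ½ μ_S² e₁ + μ_S κ e₁`,
for an arclength-parametrized generating curve `X = (r, z)` with tangent angle `θ`
(`r_s = cos θ`, `z_s = sin θ`, `κ = θ_s`), `τ = (cos θ, sin θ)`, `n = (-sin θ, cos θ)`,
`e₁ = (1,0)`, provided `μ_S = κ - (n·e₁)/r`. -/
theorem stmt12 (θ r z μS : ℝ → ℝ)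
    (hθ : ContDiff ℝ (⊤ : ℕ∞) θ) (hrr : ContDiff ℝ (⊤ : ℕ∞) r) (hzz : ContDiff ℝ (⊤ : ℕ∞) z)
    (hμS : ContDiff ℝ (⊤ : ℕ∞) μS)
    (hr : ∀ s, deriv r s = Real.cos (θ s)) (hz : ∀ s, deriv z s = Real.sin (θ s))
    (hrpos : ∀ s, 0 < r s)
    (hmean : ∀ s, μS s = deriv θ s - (-Real.sin (θ s)) / r s) (s : ℝ) :
    (deriv (fun t => r t * deriv μS t) s
        - 2 * r s * μS s * (deriv θ s * (μS s - deriv θ s))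
        + (1/2) * r s * (μS s)^3) • ((-Real.sin (θ s), Real.cos (θ s)) : ℝ × ℝ)
    = deriv (fun t =>
          (r t * deriv μS t) • ((-Real.sin (θ t), Real.cos (θ t)) : ℝ × ℝ)
          + ((1/2) * r t * (μS t)^2) • ((Real.cos (θ t), Real.sin (θ t)) : ℝ × ℝ)
          + ((-Real.sin (θ t)) * μS t) • ((Real.cos (θ t), Real.sin (θ t)) : ℝ × ℝ)) s
      - ((1/2) * (μS s)^2) • (((1:ℝ), (0:ℝ)) : ℝ × ℝ)
      + (μS s * deriv θ s) • (((1:ℝ), (0:ℝ)) : ℝ × ℝ) := by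
  -- abbreviations
  set κ := deriv θ s with hκ
  set μ' := deriv μS s with hμ'
  set A' := deriv (fun t => r t * deriv μS t) s with hA'
  have hμd : Differentiable ℝ (deriv μS) :=
    (contDiff_infty_iff_deriv.mp (hμS.of_le (by simp))).2.differentiable (by simp)
  -- basic HasDerivAt facts at s
  have hθs : HasDerivAt θ κ s := (hθ.differentiable (by simp) s).hasDerivAt
  have hμs : HasDerivAt μS μ' s := (hμS.differentiable (by simp) s).hasDerivAt
  have hμ's : HasDerivAt (deriv μS) (deriv (deriv μS) s) s :=
    (hμd s).hasDerivAt
  have hrs : HasDerivAt r (Real.cos (θ s)) s := by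
    have := (hrr.differentiable (by simp) s).hasDerivAt
    rwa [hr s] at this
  have hAs : HasDerivAt (fun t => r t * deriv μS t) A' s := by
    have h := ((hrr.differentiable (by simp) s).mul (hμd s)).hasDerivAt
    exact h
  have hsin : HasDerivAt (fun t => Real.sin (θ t)) (Real.cos (θ s) * κ) s :=
    (Real.hasDerivAt_sin (θ s)).comp s hθs
  have hcos : HasDerivAt (fun t => Real.cos (θ t)) (-Real.sin (θ s) * κ) s :=
    (Real.hasDerivAt_cos (θ s)).comp s hθs
  -- component functions
  set f₁ : ℝ → ℝ := fun t =>
    (r t * deriv μS t) * (-Real.sin (θ t))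
      + ((1/2) * r t * (μS t)^2) * Real.cos (θ t)
      + ((-Real.sin (θ t)) * μS t) * Real.cos (θ t) with hf₁
  set f₂ : ℝ → ℝ := fun t =>
    (r t * deriv μS t) * Real.cos (θ t)
      + ((1/2) * r t * (μS t)^2) * Real.sin (θ t)
      + ((-Real.sin (θ t)) * μS t) * Real.sin (θ t) with hf₂
  have hd₁ : HasDerivAt f₁
      (A' * (-Real.sin (θ s)) + (r s * μ') * (-(Real.cos (θ s) * κ))
        + (((1/2) * Real.cos (θ s) * (μS s)^2
            + (1/2) * r s * (2 * μS s * μ')) * Real.cos (θ s)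
          + ((1/2) * r s * (μS s)^2) * (-Real.sin (θ s) * κ))
        + (((-(Real.cos (θ s) * κ)) * μS s + (-Real.sin (θ s)) * μ') * Real.cos (θ s)
          + ((-Real.sin (θ s)) * μS s) * (-Real.sin (θ s) * κ))) s := by
    refine HasDerivAt.add (HasDerivAt.add ?_ ?_) ?_
    · exact hAs.mul hsin.neg
    · have h1 : HasDerivAt (fun t => (1/2 : ℝ) * r t * (μS t)^2)
          ((1/2) * Real.cos (θ s) * (μS s)^2 + (1/2) * r s * (2 * μS s * μ')) s := by
        have := ((hrs.const_mul (1/2 : ℝ)).mul (hμs.pow 2))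
        exact this.congr_deriv (by rw [Pi.pow_apply]; norm_num)
      exact h1.mul hcos
    · exact ((hsin.neg.mul hμs)).mul hcos
  have hd₂ : HasDerivAt f₂
      (A' * Real.cos (θ s) + (r s * μ') * (-Real.sin (θ s) * κ)
        + (((1/2) * Real.cos (θ s) * (μS s)^2
            + (1/2) * r s * (2 * μS s * μ')) * Real.sin (θ s)
          + ((1/2) * r s * (μS s)^2) * (Real.cos (θ s) * κ))
        + (((-(Real.cos (θ s) * κ)) * μS s + (-Real.sin (θ s)) * μ') * Real.sin (θ s)
          + ((-Real.sin (θ s)) * μS s) * (Real.cos (θ s) * κ))) s := by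
    refine HasDerivAt.add (HasDerivAt.add ?_ ?_) ?_
    · exact hAs.mul hcos
    · have h1 : HasDerivAt (fun t => (1/2 : ℝ) * r t * (μS t)^2)
          ((1/2) * Real.cos (θ s) * (μS s)^2 + (1/2) * r s * (2 * μS s * μ')) s := by
        have := ((hrs.const_mul (1/2 : ℝ)).mul (hμs.pow 2))
        exact this.congr_deriv (by rw [Pi.pow_apply]; norm_num)
      exact h1.mul hsin
    · exact ((hsin.neg.mul hμs)).mul hsin
  -- the vector-valued function is t ↦ (f₁ t, f₂ t)
  have hFeq : (fun t =>
          (r t * deriv μS t) • ((-Real.sin (θ t), Real.cos (θ t)) : ℝ × ℝ)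
          + ((1/2) * r t * (μS t)^2) • ((Real.cos (θ t), Real.sin (θ t)) : ℝ × ℝ)
          + ((-Real.sin (θ t)) * μS t) • ((Real.cos (θ t), Real.sin (θ t)) : ℝ × ℝ))
      = fun t => ((f₁ t, f₂ t) : ℝ × ℝ) := by
    funext t
    simp [hf₁, hf₂, Prod.ext_iff, smul_eq_mul]
  have hF : HasDerivAt (fun t => ((f₁ t, f₂ t) : ℝ × ℝ)) (_, _) s := hd₁.prodMk hd₂
  have hderivF := hF.deriv
  rw [hFeq, hderivF]
  -- relation from hmean
  have hrne : r s ≠ 0 := (hrpos s).ne'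
  have hsin_eq : Real.sin (θ s) = r s * (μS s - κ) := by
    have h := hmean s
    field_simp at h
    linarith [h]
  have hpyth : Real.sin (θ s) ^ 2 + Real.cos (θ s) ^ 2 = 1 := Real.sin_sq_add_cos_sq (θ s)
  rw [Prod.ext_iff]
  constructor
  · show _ = _
    simp only [Prod.fst_add, Prod.fst_sub, Prod.smul_mk, smul_eq_mul]
    rw [hsin_eq] at hpyth ⊢
    linear_combination (μS s * κ - (1/2) * (μS s)^2) * hpyth
  · show _ = _
    simp only [Prod.snd_add, Prod.snd_sub, Prod.smul_mk, smul_eq_mul]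
    rw [hsin_eq]
    ring
end
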